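/- arXiv:math/0404324 — 5 statements merged into one kernel-verified Lean document; each statement's English description precedes it below -/
import Mathlib

section
/- For every b = (x_1,…,x_n | x̄_n,…,x̄_1) in B^(l), one has ε_0(b) + ε_1(b) + 2·Σ_{i=2}^{n−2} ε_i(b) + ε_{n−1}(b) + ε_n(b) = l + Σ_{i=2}^{n−1} |x_i − x̄_i|; in particular this sum is ≥ l (the perfectness level inequality), with equality if and only if x_i = x̄_i for all i with 2 ≤ i ≤ n−1. -/
/-- An element candidate of the level-`l` perfect crystal of type `D_n^(1)`:
a pair of integer sequences `(x, x̄)`, whose relevant entries are indexed by `1, …, n`. -/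
abbrev DElt : Type := (ℕ → ℤ) × (ℕ → ℤ)

/-- All entries (indices `1, …, n`) are nonnegative; for the result of a Kashiwara
operator this expresses that the result "is not `0`". -/
def dvalid (n : ℕ) (p : DElt) : Prop :=
  ∀ i, 1 ≤ i → i ≤ n → 0 ≤ p.1 i ∧ 0 ≤ p.2 i

/-- Membership in the level-`l` perfect crystal `B^(l)` of type `D_n^(1)`:
all entries are nonnegative integers (we normalize the irrelevant indices to `0`),
`x_n = 0` or `x̄_n = 0`, and `Σ_{i=1}^n (x_i + x̄_i) = l`. -/
def dmem (n l : ℕ) (p : DElt) : Prop :=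
  dvalid n p ∧
  (∀ i, i = 0 ∨ n < i → p.1 i = 0 ∧ p.2 i = 0) ∧
  (p.1 n = 0 ∨ p.2 n = 0) ∧
  (∑ i ∈ Finset.Icc 1 n, (p.1 i + p.2 i)) = (l : ℤ)

/-- `(x)_+ = max(0, x)`. -/
def pPart (x : ℤ) : ℤ := max 0 x

/-- `φ_i(b)` for `b = (x | x̄)`:  `φ_0 = x̄_1 + (x̄_2 - x_2)_+`;
`φ_i = x_i + (x̄_{i+1} - x_{i+1})_+` for `1 ≤ i ≤ n-2`;
`φ_{n-1} = x_{n-1} + x̄_n`;  `φ_n = x_{n-1} + x_n`. -/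
def dphi (n i : ℕ) (p : DElt) : ℤ :=
  if i = 0 then p.2 1 + pPart (p.2 2 - p.1 2)
  else if i ≤ n - 2 then p.1 i + pPart (p.2 (i+1) - p.1 (i+1))
  else if i = n - 1 then p.1 (n-1) + p.2 n
  else p.1 (n-1) + p.1 n

/-- `ε_i(b)` for `b = (x | x̄)`:  `ε_0 = x_1 + (x_2 - x̄_2)_+`;
`ε_i = x̄_i + (x_{i+1} - x̄_{i+1})_+` for `1 ≤ i ≤ n-2`;
`ε_{n-1} = x̄_{n-1} + x_n`;  `ε_n = x̄_{n-1} + x̄_n`. -/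
def deps (n i : ℕ) (p : DElt) : ℤ :=
  if i = 0 then p.1 1 + pPart (p.1 2 - p.2 2)
  else if i ≤ n - 2 then p.2 i + pPart (p.1 (i+1) - p.2 (i+1))
  else if i = n - 1 then p.2 (n-1) + p.1 n
  else p.2 (n-1) + p.2 n

/-- The Kashiwara operator `f̃_i` of Theorem 2.2, as a total map on pairs of sequences;
"being `0`" is recorded by failure of `dvalid` for the result. -/
def ftilde (n i : ℕ) (p : DElt) : DElt :=
  if i = 0 then
    -- case `x_2 ≥ x̄_2` / case `x_2 < x̄_2`
    if p.2 2 ≤ p.1 2 then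
      (Function.update p.1 2 (p.1 2 + 1), Function.update p.2 1 (p.2 1 - 1))
    else
      (Function.update p.1 1 (p.1 1 + 1), Function.update p.2 2 (p.2 2 - 1))
  else if i ≤ n - 2 then
    -- case `x_{i+1} ≥ x̄_{i+1}` / case `x_{i+1} < x̄_{i+1}`
    if p.2 (i+1) ≤ p.1 (i+1) then
      (Function.update (Function.update p.1 i (p.1 i - 1)) (i+1) (p.1 (i+1) + 1), p.2)
    else
      (p.1, Function.update (Function.update p.2 (i+1) (p.2 (i+1) - 1)) i (p.2 i + 1))
  else if i = n - 1 then
    -- case `x̄_n = 0` / case `x_n = 0, x̄_n ≥ 1`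
    if p.2 n = 0 then
      (Function.update (Function.update p.1 (n-1) (p.1 (n-1) - 1)) n (p.1 n + 1), p.2)
    else
      (p.1, Function.update (Function.update p.2 n (p.2 n - 1)) (n-1) (p.2 (n-1) + 1))
  else
    -- `i = n`: case `x_n ≥ 1, x̄_n = 0` / case `x_n = 0`
    if 1 ≤ p.1 n ∧ p.2 n = 0 then
      (Function.update p.1 n (p.1 n - 1), Function.update p.2 (n-1) (p.2 (n-1) + 1))
    else
      (Function.update p.1 (n-1) (p.1 (n-1) - 1), Function.update p.2 n (p.2 n + 1))

/-- The Kashiwara operator `ẽ_i` of Theorem 2.2, as a total map on pairs of sequences;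
"being `0`" is recorded by failure of `dvalid` for the result. -/
def etilde (n i : ℕ) (p : DElt) : DElt :=
  if i = 0 then
    -- case `x_2 > x̄_2` / case `x_2 ≤ x̄_2`
    if p.2 2 < p.1 2 then
      (Function.update p.1 2 (p.1 2 - 1), Function.update p.2 1 (p.2 1 + 1))
    else
      (Function.update p.1 1 (p.1 1 - 1), Function.update p.2 2 (p.2 2 + 1))
  else if i ≤ n - 2 then
    -- case `x_{i+1} > x̄_{i+1}` / case `x_{i+1} ≤ x̄_{i+1}`
    if p.2 (i+1) < p.1 (i+1) then
      (Function.update (Function.update p.1 i (p.1 i + 1)) (i+1) (p.1 (i+1) - 1), p.2)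
    else
      (p.1, Function.update (Function.update p.2 (i+1) (p.2 (i+1) + 1)) i (p.2 i - 1))
  else if i = n - 1 then
    -- case `x_n ≥ 1, x̄_n = 0` / case `x_n = 0`
    if 1 ≤ p.1 n ∧ p.2 n = 0 then
      (Function.update (Function.update p.1 (n-1) (p.1 (n-1) + 1)) n (p.1 n - 1), p.2)
    else
      (p.1, Function.update (Function.update p.2 n (p.2 n + 1)) (n-1) (p.2 (n-1) - 1))
  else
    -- `i = n`: case `x̄_n = 0` / case `x_n = 0, x̄_n ≥ 1`
    if p.2 n = 0 then
      (Function.update p.1 n (p.1 n + 1), Function.update p.2 (n-1) (p.2 (n-1) - 1))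
    else
      (Function.update p.1 (n-1) (p.1 (n-1) + 1), Function.update p.2 n (p.2 n - 1))

/-!
Write `d_i = x_i - x̄_i`. Since `2 (d)_+ = |d| + d`, the doubled `ε_i` with `1 ≤ i ≤ n-2` equals
`2 x̄_i + |d_{i+1}| + d_{i+1}`. Shifting the index of the `d`-terms, each `i` with `2 ≤ i ≤ n-1`
collects exactly `2 x̄_i + |d_i| + d_i = x_i + x̄_i + |d_i|`: the `d_2`-term from `ε_0 + ε_1`, the
`2 x̄_{n-1}` from `ε_{n-1} + ε_n`. The remaining ends give `x_1 + x̄_1 + x_n + x̄_n`, so the weighted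
sum is `Σ_{i=1}^n (x_i + x̄_i) = l` plus `Σ_{i=2}^{n-1} |d_i|`.
-/

open Finset

lemma two_mul_pPart_sub_add_two_mul (a b : ℤ) :
    2 * pPart (a - b) + 2 * b = a + b + |a - b| := by
  unfold pPart
  rcases abs_cases (a - b) with h | h <;> rcases max_cases 0 (a - b) with h' | h' <;> linarith

section deps

variable {n : ℕ} (p : DElt)

lemma deps_zero : deps n 0 p = p.1 1 + pPart (p.1 2 - p.2 2) := by
  simp [deps]

lemma deps_of_le {i : ℕ} (hi : 1 ≤ i) (hin : i ≤ n - 2) :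
    deps n i p = p.2 i + pPart (p.1 (i + 1) - p.2 (i + 1)) := by
  rw [deps, if_neg (by omega), if_pos hin]

lemma deps_sub_one (hn : 2 ≤ n) : deps n (n - 1) p = p.2 (n - 1) + p.1 n := by
  rw [deps, if_neg (by omega), if_neg (by omega), if_pos rfl]

lemma deps_self (hn : 1 ≤ n) : deps n n p = p.2 (n - 1) + p.2 n := by
  rw [deps, if_neg (by omega), if_neg (by omega), if_neg (by omega)]

end deps

lemma sum_Icc_pPart_shift_eq_sum_add_abs (x y : ℕ → ℤ) {m : ℕ} (hm : 1 ≤ m) :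
    2 * pPart (x 2 - y 2) + ∑ i ∈ Icc 2 m, 2 * (y i + pPart (x (i + 1) - y (i + 1)))
        + 2 * y (m + 1)
      = ∑ i ∈ Icc 2 (m + 1), (x i + y i + |x i - y i|) := by
  induction m, hm using Nat.le_induction with
  | base => simp [two_mul_pPart_sub_add_two_mul]
  | succ m hm ih =>
    rw [sum_Icc_succ_top (by omega), sum_Icc_succ_top (b := m + 1) (by omega), ← ih]
    linarith [two_mul_pPart_sub_add_two_mul (x (m + 2)) (y (m + 2))]

lemma sum_Icc_one_eq_add_sum_Icc_two_add {M : Type*} [AddCommMonoid M] (f : ℕ → M) {n : ℕ}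
    (hn : 2 ≤ n) : ∑ i ∈ Icc 1 n, f i = f 1 + ∑ i ∈ Icc 2 (n - 1), f i + f n := by
  obtain ⟨m, rfl⟩ : ∃ m, n = m + 1 := ⟨n - 1, by omega⟩
  rw [sum_Icc_succ_top (by omega), ← add_sum_Ioc_eq_sum_Icc (by omega),
    ← Icc_add_one_left_eq_Ioc, Nat.add_sub_cancel]
  rfl

lemma weighted_sum_deps_eq {n : ℕ} (hn : 3 ≤ n) (p : DElt) :
    deps n 0 p + deps n 1 p + 2 * (∑ i ∈ Icc 2 (n - 2), deps n i p) + deps n (n - 1) p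
        + deps n n p
      = ∑ i ∈ Icc 1 n, (p.1 i + p.2 i) + ∑ i ∈ Icc 2 (n - 1), |p.1 i - p.2 i| := by
  obtain ⟨m, rfl⟩ : ∃ m, n = m + 2 := ⟨n - 2, by omega⟩
  have hmid : ∑ i ∈ Icc 2 m, deps (m + 2) i p
      = ∑ i ∈ Icc 2 m, (p.2 i + pPart (p.1 (i + 1) - p.2 (i + 1))) :=
    sum_congr rfl fun i hi => deps_of_le p (by grind) (by grind)
  have hregroup := sum_Icc_pPart_shift_eq_sum_add_abs p.1 p.2 (m := m) (by omega)
  rw [deps_zero, deps_of_le p le_rfl (by omega), deps_sub_one p (by omega),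
    deps_self p (by omega), sum_Icc_one_eq_add_sum_Icc_two_add _ (by omega)]
  simp only [Nat.add_sub_cancel, show m + 2 - 1 = m + 1 by omega, Nat.reduceAdd] at hmid ⊢
  rw [sum_add_distrib] at hregroup
  rw [hmid, mul_sum]
  linarith

theorem stmt13_general (n l : ℕ) (hn : 4 ≤ n) (p : DElt) (hp : dmem n l p) :
    (deps n 0 p + deps n 1 p + 2 * (∑ i ∈ Finset.Icc 2 (n-2), deps n i p)
        + deps n (n-1) p + deps n n p
      = (l : ℤ) + ∑ i ∈ Finset.Icc 2 (n-1), |p.1 i - p.2 i|) ∧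
    ((l : ℤ) ≤ deps n 0 p + deps n 1 p + 2 * (∑ i ∈ Finset.Icc 2 (n-2), deps n i p)
        + deps n (n-1) p + deps n n p) ∧
    (deps n 0 p + deps n 1 p + 2 * (∑ i ∈ Finset.Icc 2 (n-2), deps n i p)
        + deps n (n-1) p + deps n n p = (l : ℤ) ↔
      ∀ i, 2 ≤ i → i ≤ n - 1 → p.1 i = p.2 i) := by
  have key := weighted_sum_deps_eq (n := n) (by omega) p
  rw [hp.2.2.2] at key
  have hnonneg : 0 ≤ ∑ i ∈ Icc 2 (n - 1), |p.1 i - p.2 i| := sum_nonneg fun _ _ => abs_nonneg _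
  refine ⟨key, by linarith, ?_⟩
  rw [key, add_eq_left, sum_eq_zero_iff_of_nonneg fun _ _ => abs_nonneg _]
  simp only [mem_Icc, abs_eq_zero, sub_eq_zero, and_imp]

/-- for `b = (x | x̄) ∈ B^(l)`,
`ε_0 + ε_1 + 2 Σ_{i=2}^{n-2} ε_i + ε_{n-1} + ε_n = l + Σ_{i=2}^{n-1} |x_i - x̄_i|`;
in particular this sum is `≥ l`, with equality iff `x_i = x̄_i` for all `2 ≤ i ≤ n-1`. -/
theorem stmt13 (n l : ℕ) (hn : 4 ≤ n) (hl : 1 ≤ l) (p : DElt) (hp : dmem n l p) :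
    (deps n 0 p + deps n 1 p + 2 * (∑ i ∈ Finset.Icc 2 (n-2), deps n i p)
        + deps n (n-1) p + deps n n p
      = (l : ℤ) + ∑ i ∈ Finset.Icc 2 (n-1), |p.1 i - p.2 i|) ∧
    ((l : ℤ) ≤ deps n 0 p + deps n 1 p + 2 * (∑ i ∈ Finset.Icc 2 (n-2), deps n i p)
        + deps n (n-1) p + deps n n p) ∧
    (deps n 0 p + deps n 1 p + 2 * (∑ i ∈ Finset.Icc 2 (n-2), deps n i p)
        + deps n (n-1) p + deps n n p = (l : ℤ) ↔
      ∀ i, 2 ≤ i → i ≤ n - 1 → p.1 i = p.2 i) :=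
  stmt13_general n l hn p hp
end

section
/- The map b ↦ (φ_0(b), φ_1(b), …, φ_n(b)) restricts to a bijection from the set of minimal elements {b ∈ B^(l) : x_i = x̄_i for all 2 ≤ i ≤ n−1} onto the set {(a_0,…,a_n) ∈ ℕ^{n+1} : a_0 + a_1 + 2(a_2 + ⋯ + a_{n−2}) + a_{n−1} + a_n = l} of level-l dominant classical weights of D_n^(1). -/
/-!
On a minimal element (`x_i = x̄_i` for `2 ≤ i ≤ n-1`) every positive part in `φ`
vanishes, so `φ_0 = x̄_1`, `φ_i = x_i` for `1 ≤ i ≤ n-2`, `φ_{n-1} = x_{n-1} + x̄_n` and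
`φ_n = x_{n-1} + x_n`. Since one of `x_n, x̄_n` is zero, `x_{n-1} = min(φ_{n-1}, φ_n)`, and
`x_n`, `x̄_n` are the positive parts of `φ_n - φ_{n-1}` and `φ_{n-1} - φ_n`; this is the
inverse map. Under `φ` the level `Σ (x_i + x̄_i)` becomes
`a_0 + a_1 + 2(a_2 + ⋯ + a_{n-2}) + a_{n-1} + a_n`.
-/

lemma Finset.sum_Icc_one_eq_of_three_le {M : Type*} [AddCommMonoid M] {n : ℕ} (hn : 3 ≤ n)
    (F : ℕ → M) :
    ∑ i ∈ Finset.Icc 1 n, F i = F 1 + ∑ i ∈ Finset.Icc 2 (n-2), F i + F (n-1) + F n := by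
  obtain ⟨m, rfl⟩ : ∃ m, n = m + 1 + 1 + 1 := ⟨n - 3, by omega⟩
  rw [show m + 1 + 1 + 1 - 2 = m + 1 by omega, show m + 1 + 1 + 1 - 1 = m + 1 + 1 by omega,
    Finset.sum_Icc_succ_top (by omega), Finset.sum_Icc_succ_top (by omega),
    ← Finset.add_sum_Ioc_eq_sum_Icc (by omega), ← Finset.Icc_add_one_left_eq_Ioc]
  rfl

def IsMinimal (n : ℕ) (p : DElt) : Prop :=
  ∀ i, 2 ≤ i → i ≤ n - 1 → p.1 i = p.2 i

def phiVec (n : ℕ) (p : DElt) : ℕ → ℤ :=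
  fun i => if i ≤ n then dphi n i p else 0

def weightLevel (n : ℕ) (a : ℕ → ℤ) : ℤ :=
  a 0 + a 1 + 2 * (∑ i ∈ Finset.Icc 2 (n-2), a i) + a (n-1) + a n

section phiVec

variable {n i : ℕ} {p : DElt}

lemma dphi_nonneg (hn : 2 ≤ n) (hp : dvalid n p) (hi : i ≤ n) : 0 ≤ dphi n i p := by
  have pPart_nonneg (x : ℤ) : 0 ≤ pPart x := le_max_left 0 x
  unfold dphi
  split_ifs
  · exact add_nonneg (hp 1 le_rfl (by omega)).2 (pPart_nonneg _)
  · exact add_nonneg (hp i (by omega) (by omega)).1 (pPart_nonneg _)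
  · exact add_nonneg (hp (n-1) (by omega) (by omega)).1 (hp n (by omega) le_rfl).2
  · exact add_nonneg (hp (n-1) (by omega) (by omega)).1 (hp n (by omega) le_rfl).1

lemma phiVec_zero (h : p.1 2 = p.2 2) : phiVec n p 0 = p.2 1 := by
  simp [phiVec, dphi, pPart, h]

lemma phiVec_of_le_sub_two (h1 : 1 ≤ i) (h2 : i ≤ n - 2) (h : p.1 (i+1) = p.2 (i+1)) :
    phiVec n p i = p.1 i := by
  simp [phiVec, dphi, pPart, h, h2, show i ≤ n by omega, show i ≠ 0 by omega]

lemma phiVec_sub_one (hn : 2 ≤ n) : phiVec n p (n-1) = p.1 (n-1) + p.2 n := by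
  rw [phiVec, if_pos (by omega), dphi, if_neg (by omega), if_neg (by omega), if_pos rfl]

lemma phiVec_self (hn : 1 ≤ n) : phiVec n p n = p.1 (n-1) + p.1 n := by
  rw [phiVec, if_pos le_rfl, dphi, if_neg (by omega), if_neg (by omega), if_neg (by omega)]

lemma phiVec_of_lt (h : n < i) : phiVec n p i = 0 :=
  if_neg (by omega)

lemma weightLevel_phiVec (hn : 3 ≤ n) (hmin : IsMinimal n p) :
    weightLevel n (phiVec n p) = ∑ i ∈ Finset.Icc 1 n, (p.1 i + p.2 i) := by
  have hmid : ∑ i ∈ Finset.Icc 2 (n-2), phiVec n p i = ∑ i ∈ Finset.Icc 2 (n-2), p.1 i :=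
    Finset.sum_congr rfl fun i hi => by
      rw [Finset.mem_Icc] at hi
      exact phiVec_of_le_sub_two (by omega) hi.2 (hmin (i+1) (by omega) (by omega))
  have hdouble :
      ∑ i ∈ Finset.Icc 2 (n-2), (p.1 i + p.2 i) = 2 * ∑ i ∈ Finset.Icc 2 (n-2), p.1 i := by
    rw [Finset.mul_sum]
    refine Finset.sum_congr rfl fun i hi => ?_
    rw [Finset.mem_Icc] at hi
    rw [← hmin i hi.1 (by omega), two_mul]
  rw [Finset.sum_Icc_one_eq_of_three_le hn, hdouble, weightLevel, hmid,
    phiVec_zero (hmin 2 le_rfl (by omega)),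
    phiVec_of_le_sub_two le_rfl (by omega) (hmin 2 le_rfl (by omega)),
    phiVec_sub_one (by omega), phiVec_self (by omega), hmin (n-1) (by omega) le_rfl]
  ring

end phiVec

def minimalOfWeight (n : ℕ) (a : ℕ → ℤ) : DElt :=
  (fun i => if i = 0 ∨ n < i then 0
    else if i ≤ n-2 then a i
    else if i = n-1 then min (a (n-1)) (a n)
    else max 0 (a n - a (n-1)),
   fun i => if i = 0 ∨ n < i then 0
    else if i = 1 then a 0
    else if i ≤ n-2 then a i
    else if i = n-1 then min (a (n-1)) (a n)
    else max 0 (a (n-1) - a n))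

section minimalOfWeight

variable {n : ℕ} (a : ℕ → ℤ)

lemma isMinimal_minimalOfWeight : IsMinimal n (minimalOfWeight n a) := by
  intro i hi2 hin
  simp only [minimalOfWeight]
  split_ifs <;> omega

lemma minimalOfWeight_fst_of_le_sub_two {i : ℕ} (h1 : 1 ≤ i) (h2 : i ≤ n - 2) :
    (minimalOfWeight n a).1 i = a i := by
  simp only [minimalOfWeight]
  split_ifs <;> omega

lemma minimalOfWeight_snd_one (hn : 1 ≤ n) : (minimalOfWeight n a).2 1 = a 0 := by
  simp [minimalOfWeight, show ¬ n < 1 by omega]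

lemma minimalOfWeight_snd_of_le_sub_two {i : ℕ} (h1 : 2 ≤ i) (h2 : i ≤ n - 2) :
    (minimalOfWeight n a).2 i = a i := by
  simp only [minimalOfWeight]
  split_ifs <;> omega

lemma minimalOfWeight_fst_sub_one (hn : 2 ≤ n) :
    (minimalOfWeight n a).1 (n-1) = min (a (n-1)) (a n) := by
  simp only [minimalOfWeight]
  split_ifs <;> omega

lemma minimalOfWeight_fst_self (hn : 1 ≤ n) :
    (minimalOfWeight n a).1 n = max 0 (a n - a (n-1)) := by
  simp only [minimalOfWeight]
  split_ifs <;> omega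

lemma minimalOfWeight_snd_self (hn : 2 ≤ n) :
    (minimalOfWeight n a).2 n = max 0 (a (n-1) - a n) := by
  simp only [minimalOfWeight]
  split_ifs <;> omega

lemma phiVec_minimalOfWeight (hn : 3 ≤ n) (ha : ∀ i, n < i → a i = 0) :
    phiVec n (minimalOfWeight n a) = a := by
  have hmin := isMinimal_minimalOfWeight (n := n) a
  funext i
  rcases Nat.lt_or_ge n i with hi | hi
  · rw [phiVec_of_lt hi, ha i hi]
  rcases Nat.eq_zero_or_pos i with rfl | hi0
  · rw [phiVec_zero (hmin 2 le_rfl (by omega)), minimalOfWeight_snd_one a (by omega)]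
  by_cases hi2 : i ≤ n - 2
  · rw [phiVec_of_le_sub_two hi0 hi2 (hmin (i+1) (by omega) (by omega)),
      minimalOfWeight_fst_of_le_sub_two a hi0 hi2]
  obtain rfl | rfl : i = n - 1 ∨ i = n := by omega
  · rw [phiVec_sub_one (by omega), minimalOfWeight_fst_sub_one a (by omega),
      minimalOfWeight_snd_self a (by omega)]
    omega
  · rw [phiVec_self (by omega), minimalOfWeight_fst_sub_one a (by omega),
      minimalOfWeight_fst_self a (by omega)]
    omega

lemma dmem_minimalOfWeight {l : ℕ} (hn : 3 ≤ n) (ha₀ : ∀ i, i ≤ n → 0 ≤ a i)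
    (ha : ∀ i, n < i → a i = 0) (hl : weightLevel n a = l) :
    dmem n l (minimalOfWeight n a) := by
  refine ⟨fun i hi1 hin => ?_, fun i hi => ⟨if_pos hi, if_pos hi⟩, ?_, ?_⟩
  · have := ha₀ i hin
    have := ha₀ 0 (by omega)
    have := ha₀ (n-1) (by omega)
    have := ha₀ n le_rfl
    simp only [minimalOfWeight]
    constructor <;> split_ifs <;> omega
  · rw [minimalOfWeight_fst_self a (by omega), minimalOfWeight_snd_self a (by omega)]
    omega
  · rw [← weightLevel_phiVec hn (isMinimal_minimalOfWeight a), phiVec_minimalOfWeight a hn ha,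
      hl]

end minimalOfWeight

lemma minimalOfWeight_phiVec {n l : ℕ} {p : DElt} (hn : 3 ≤ n) (hp : dmem n l p)
    (hmin : IsMinimal n p) : minimalOfWeight n (phiVec n p) = p := by
  obtain ⟨hv, hout, hzero, -⟩ := hp
  have hnonneg_pred := hv (n-1) (by omega) (by omega)
  have hnonneg := hv n (by omega) le_rfl
  have hsub := phiVec_sub_one (p := p) (by omega : 2 ≤ n)
  have hself := phiVec_self (p := p) (by omega : 1 ≤ n)
  ext i
  · obtain hi | hi | rfl | rfl :
        (i = 0 ∨ n < i) ∨ (1 ≤ i ∧ i ≤ n - 2) ∨ i = n - 1 ∨ i = n := by omega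
    · exact (if_pos hi).trans (hout i hi).1.symm
    · rw [minimalOfWeight_fst_of_le_sub_two _ hi.1 hi.2]
      exact phiVec_of_le_sub_two hi.1 hi.2 (hmin (i+1) (by omega) (by omega))
    · rw [minimalOfWeight_fst_sub_one _ (by omega), hsub, hself]
      omega
    · rw [minimalOfWeight_fst_self _ (by omega), hsub, hself]
      omega
  · obtain hi | rfl | hi | rfl | rfl :
        (i = 0 ∨ n < i) ∨ i = 1 ∨ (2 ≤ i ∧ i ≤ n - 2) ∨ i = n - 1 ∨ i = n := by
      omega
    · exact (if_pos hi).trans (hout i hi).2.symm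
    · rw [minimalOfWeight_snd_one _ (by omega)]
      exact phiVec_zero (hmin 2 le_rfl (by omega))
    · rw [minimalOfWeight_snd_of_le_sub_two _ hi.1 hi.2, ← hmin i hi.1 (by omega)]
      exact phiVec_of_le_sub_two (by omega) hi.2 (hmin (i+1) (by omega) (by omega))
    · rw [← isMinimal_minimalOfWeight _ (n-1) (by omega) le_rfl,
        minimalOfWeight_fst_sub_one _ (by omega), hsub, hself, ← hmin (n-1) (by omega) le_rfl]
      omega
    · rw [minimalOfWeight_snd_self _ (by omega), hsub, hself]
      omega

theorem stmt15_general (n l : ℕ) (hn : 4 ≤ n) :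
    Set.BijOn (fun p : DElt => fun i : ℕ => if i ≤ n then dphi n i p else 0)
      {p : DElt | dmem n l p ∧ ∀ i, 2 ≤ i → i ≤ n - 1 → p.1 i = p.2 i}
      {a : ℕ → ℤ | (∀ i, i ≤ n → 0 ≤ a i) ∧ (∀ i, n < i → a i = 0) ∧
        a 0 + a 1 + 2 * (∑ i ∈ Finset.Icc 2 (n-2), a i) + a (n-1) + a n = (l : ℤ)} := by
  refine Set.InvOn.bijOn (f' := minimalOfWeight n)
    ⟨fun p hp => minimalOfWeight_phiVec (by omega) hp.1 hp.2,
     fun a ha => phiVec_minimalOfWeight a (by omega) ha.2.1⟩ ?_ ?_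
  · rintro p ⟨hp, hmin⟩
    refine ⟨fun i hi => ?_, fun i hi => phiVec_of_lt hi, ?_⟩
    · exact (if_pos hi).trans_ge (dphi_nonneg (by omega) hp.1 hi)
    · exact (weightLevel_phiVec (by omega) hmin).trans hp.2.2.2
  · rintro a ⟨ha₀, ha, hl⟩
    exact ⟨dmem_minimalOfWeight a (by omega) ha₀ ha hl, isMinimal_minimalOfWeight a⟩

/-- `b ↦ (φ_0(b), …, φ_n(b))` is a bijection from the set of minimal
elements `{b ∈ B^(l) : x_i = x̄_i for 2 ≤ i ≤ n-1}` onto the set of level-`l` dominant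
classical weights `{(a_0,…,a_n) ∈ ℕ^{n+1} : a_0 + a_1 + 2(a_2 + ⋯ + a_{n-2}) + a_{n-1} + a_n = l}`
(tuples are encoded as integer sequences vanishing beyond index `n`). -/
theorem stmt15 (n l : ℕ) (hn : 4 ≤ n) (hl : 1 ≤ l) :
    Set.BijOn (fun p : DElt => fun i : ℕ => if i ≤ n then dphi n i p else 0)
      {p : DElt | dmem n l p ∧ ∀ i, 2 ≤ i → i ≤ n - 1 → p.1 i = p.2 i}
      {a : ℕ → ℤ | (∀ i, i ≤ n → 0 ≤ a i) ∧ (∀ i, n < i → a i = 0) ∧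
        a 0 + a 1 + 2 * (∑ i ∈ Finset.Icc 2 (n-2), a i) + a (n-1) + a n = (l : ℤ)} :=
  stmt15_general n l hn
end

section
/- (Combinatorial core of the slice realization, Theorem 3.7.) Let Y^(l) be the set of tuples of nonnegative integers (y_1,…,y_n, ȳ_1,…,ȳ_n, y*_{01}, y*_2,…,y*_{n−2}, y*_{n−1,n}) such that y_i·ȳ_i = 0 for all 1 ≤ i ≤ n and 2(y*_{01} + Σ_{i=2}^{n−2} y*_i + y*_{n−1,n}) + Σ_{i=1}^n (y_i + ȳ_i) = l. Define Φ : Y^(l) → B^(l) by x_1 = y_1 + y*_{01}; x_i = y_i + y*_i for 2 ≤ i ≤ n−2; x_{n−1} = y_{n−1} + y*_{n−1,n}; x_n = y_n; x̄_n = ȳ_n; x̄_{n−1} = ȳ_{n−1} + y*_{n−1,n}; x̄_i = ȳ_i + y*_i for 2 ≤ i ≤ n−2; x̄_1 = ȳ_1 + y*_{01}. Define Ψ : B^(l) → Y^(l) by y_i = (x_i − x̄_i)_+ and ȳ_i = (x̄_i − x_i)_+ for 1 ≤ i ≤ n−1; y_n = x_n; ȳ_n = x̄_n; y*_{01} = min(x_1,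 x̄_1); y*_i = min(x_i, x̄_i) for 2 ≤ i ≤ n−2; y*_{n−1,n} = min(x_{n−1}, x̄_{n−1}). Then Φ and Ψ are well-defined and are mutually inverse bijections between Y^(l) and B^(l). -/
/-- Data for `Y^(l)`: a triple `(y, ȳ, y*)` of integer sequences; `y, ȳ` are indexed by
`1, …, n` and `y*` by `1, …, n-1` (index `1` encodes `y*_{01}`, index `i` with
`2 ≤ i ≤ n-2` encodes `y*_i`, and index `n-1` encodes `y*_{n-1,n}`). -/
abbrev YElt : Type := (ℕ → ℤ) × (ℕ → ℤ) × (ℕ → ℤ)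

/-- Membership in `Y^(l)`: all entries nonnegative (irrelevant indices normalized to `0`),
`y_i ⋅ ȳ_i = 0` for `1 ≤ i ≤ n`, and
`2(y*_{01} + Σ_{i=2}^{n-2} y*_i + y*_{n-1,n}) + Σ_{i=1}^n (y_i + ȳ_i) = l`. -/
def ymem (n l : ℕ) (q : YElt) : Prop :=
  (∀ i, 1 ≤ i → i ≤ n → 0 ≤ q.1 i ∧ 0 ≤ q.2.1 i) ∧
  (∀ i, 1 ≤ i → i ≤ n - 1 → 0 ≤ q.2.2 i) ∧
  (∀ i, i = 0 ∨ n < i → q.1 i = 0 ∧ q.2.1 i = 0) ∧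
  (∀ i, i = 0 ∨ n - 1 < i → q.2.2 i = 0) ∧
  (∀ i, 1 ≤ i → i ≤ n → q.1 i * q.2.1 i = 0) ∧
  2 * (∑ i ∈ Finset.Icc 1 (n-1), q.2.2 i)
    + (∑ i ∈ Finset.Icc 1 n, (q.1 i + q.2.1 i)) = (l : ℤ)

/-- The map `Φ : Y^(l) → B^(l)`:  `x_i = y_i + y*_i` for `1 ≤ i ≤ n-1` (with the
conventions `y*_1 = y*_{01}`, `y*_{n-1} = y*_{n-1,n}`), `x_n = y_n`; similarly for `x̄`. -/
def PhiMap (n : ℕ) (q : YElt) : DElt :=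
  (fun i => if 1 ≤ i ∧ i ≤ n - 1 then q.1 i + q.2.2 i else if i = n then q.1 n else 0,
   fun i => if 1 ≤ i ∧ i ≤ n - 1 then q.2.1 i + q.2.2 i else if i = n then q.2.1 n else 0)

/-- The map `Ψ : B^(l) → Y^(l)`:  `y_i = (x_i - x̄_i)_+`, `ȳ_i = (x̄_i - x_i)_+` for
`1 ≤ i ≤ n-1`; `y_n = x_n`, `ȳ_n = x̄_n`; `y*_i = min(x_i, x̄_i)` for `1 ≤ i ≤ n-1`. -/
def PsiMap (n : ℕ) (p : DElt) : YElt :=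
  (fun i => if 1 ≤ i ∧ i ≤ n - 1 then max 0 (p.1 i - p.2 i)
            else if i = n then p.1 n else 0,
   fun i => if 1 ≤ i ∧ i ≤ n - 1 then max 0 (p.2 i - p.1 i)
            else if i = n then p.2 n else 0,
   fun i => if 1 ≤ i ∧ i ≤ n - 1 then min (p.1 i) (p.2 i) else 0)

/-!
Both maps only act coordinatewise once the boundary conventions are unfolded: off the support
the entries vanish, and at `i = n` the condition `x_n = 0 ∨ x̄_n = 0` (resp. `y*_n = 0`) makes the
general formulas `x = y + y*`, `x̄ = ȳ + y*` and `y = (x - x̄)_+`, `ȳ = (x̄ - x)_+`, `y* = min(x, x̄)`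
valid there too. For integers, `(x, x̄) ↦ ((x - x̄)_+, (x̄ - x)_+, min(x, x̄))` and
`(y, ȳ, y*) ↦ (y + y*, ȳ + y*)` are inverse between pairs of nonnegative integers and triples
with `y ȳ = 0`; the level conditions match because `x + x̄ = y + ȳ + 2 y*`.
-/

variable {n l : ℕ}

lemma sum_Icc_pred_eq_sum_Icc (f : ℕ → ℤ) (hf : f n = 0) :
    ∑ i ∈ Finset.Icc 1 (n - 1), f i = ∑ i ∈ Finset.Icc 1 n, f i := by
  rcases n with _ | m
  · rfl
  · rw [Finset.sum_Icc_succ_top (by omega), hf, add_zero, Nat.add_sub_cancel]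

lemma dmem.nonneg {p : DElt} (hp : dmem n l p) (i : ℕ) : 0 ≤ p.1 i ∧ 0 ≤ p.2 i := by
  by_cases hi : 1 ≤ i ∧ i ≤ n
  · exact hp.1 i hi.1 hi.2
  · obtain ⟨h₁, h₂⟩ := hp.2.1 i (by omega)
    omega

lemma ymem.nonneg {q : YElt} (hq : ymem n l q) (i : ℕ) :
    0 ≤ q.1 i ∧ 0 ≤ q.2.1 i ∧ 0 ≤ q.2.2 i := by
  obtain ⟨hnn, hstar, hz, hz', -, -⟩ := hq
  have hy : 0 ≤ q.1 i ∧ 0 ≤ q.2.1 i := by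
    by_cases hi : 1 ≤ i ∧ i ≤ n
    · exact hnn i hi.1 hi.2
    · obtain ⟨h₁, h₂⟩ := hz i (by omega)
      omega
  have hy' : 0 ≤ q.2.2 i := by
    by_cases hi : 1 ≤ i ∧ i ≤ n - 1
    · exact hstar i hi.1 hi.2
    · exact (hz' i (by omega)).ge
  exact ⟨hy.1, hy.2, hy'⟩

lemma ymem.eq_zero_or {q : YElt} (hq : ymem n l q) (i : ℕ) : q.1 i = 0 ∨ q.2.1 i = 0 := by
  by_cases hi : 1 ≤ i ∧ i ≤ n
  · exact mul_eq_zero.1 (hq.2.2.2.2.1 i hi.1 hi.2)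
  · exact Or.inl (hq.2.2.1 i (by omega)).1

lemma ymem.snd_snd_self_eq_zero {q : YElt} (hq : ymem n l q) : q.2.2 n = 0 :=
  hq.2.2.2.1 n (by omega)

lemma dmem.min_self_eq_zero {p : DElt} (hp : dmem n l p) : min (p.1 n) (p.2 n) = 0 := by
  have := hp.nonneg n
  rcases hp.2.2.1 with h | h <;> omega

lemma phiMap_eq {q : YElt} (hz : ∀ i, i = 0 ∨ n < i → q.1 i = 0 ∧ q.2.1 i = 0)
    (hz' : ∀ i, i = 0 ∨ n - 1 < i → q.2.2 i = 0) :
    PhiMap n q = (q.1 + q.2.2, q.2.1 + q.2.2) := by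
  refine Prod.ext (funext fun i => ?_) (funext fun i => ?_) <;>
  · simp only [PhiMap, Pi.add_apply]
    split_ifs with hi hn
    · rfl
    · subst hn
      have := hz' i (by omega)
      omega
    · have := hz i (by omega)
      have := hz' i (by omega)
      omega

lemma psiMap_eq {p : DElt} (hp : dmem n l p) :
    PsiMap n p = (fun i => max 0 (p.1 i - p.2 i), fun i => max 0 (p.2 i - p.1 i),
      fun i => min (p.1 i) (p.2 i)) := by
  have hmin := hp.min_self_eq_zero
  refine Prod.ext (funext fun i => ?_) (Prod.ext (funext fun i => ?_) (funext fun i => ?_)) <;>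
  · have := hp.nonneg i
    simp only [PsiMap]
    obtain rfl | hne := eq_or_ne i n
    · split_ifs <;> omega
    · split_ifs <;> first
        | rfl
        | have := hp.2.1 i (by omega); omega

lemma phiMap_mem {q : YElt} (hq : ymem n l q) : dmem n l (PhiMap n q) := by
  obtain ⟨-, -, hz, hz', -, hsum⟩ := id hq
  have hn := hq.snd_snd_self_eq_zero
  rw [phiMap_eq hz hz']
  refine ⟨fun i _ _ => ?_, fun i hi => ?_, ?_, ?_⟩
  · have := hq.nonneg i
    simp only [Pi.add_apply]
    omega
  · simp only [Pi.add_apply, (hz i hi).1, (hz i hi).2, hz' i (by omega), add_zero, and_self]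
  · simpa only [Pi.add_apply, hn, add_zero] using hq.eq_zero_or n
  · rw [← hsum, sum_Icc_pred_eq_sum_Icc _ hn, Finset.mul_sum, ← Finset.sum_add_distrib]
    refine Finset.sum_congr rfl fun i _ => ?_
    simp only [Pi.add_apply]
    ring

lemma psiMap_mem {p : DElt} (hp : dmem n l p) : ymem n l (PsiMap n p) := by
  have hmin := hp.min_self_eq_zero
  rw [psiMap_eq hp]
  refine ⟨fun i _ _ => ⟨le_max_left _ _, le_max_left _ _⟩,
    fun i _ _ => le_min (hp.nonneg i).1 (hp.nonneg i).2, fun i hi => ?_, fun i hi => ?_,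
    fun i _ _ => ?_, ?_⟩ <;> dsimp only
  · have := hp.2.1 i hi
    omega
  · by_cases h : i = n
    · exact h ▸ hmin
    · have := hp.2.1 i (by omega)
      omega
  · rcases le_total (p.1 i) (p.2 i) with h | h
    · rw [max_eq_left (by omega), zero_mul]
    · rw [max_eq_left (by omega : p.2 i - p.1 i ≤ 0), mul_zero]
  · rw [sum_Icc_pred_eq_sum_Icc (fun i => min (p.1 i) (p.2 i)) hmin, Finset.mul_sum,
      ← Finset.sum_add_distrib, ← hp.2.2.2]
    refine Finset.sum_congr rfl fun i _ => ?_
    omega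

lemma psiMap_phiMap {q : YElt} (hq : ymem n l q) : PsiMap n (PhiMap n q) = q := by
  rw [psiMap_eq (phiMap_mem hq), phiMap_eq hq.2.2.1 hq.2.2.2.1]
  refine Prod.ext (funext fun i => ?_) (Prod.ext (funext fun i => ?_) (funext fun i => ?_)) <;>
  · have := hq.nonneg i
    simp only [Pi.add_apply]
    rcases hq.eq_zero_or i with h | h <;> omega

lemma phiMap_psiMap {p : DElt} (hp : dmem n l p) : PhiMap n (PsiMap n p) = p := by
  obtain ⟨-, -, hz, hz', -, -⟩ := psiMap_mem hp
  rw [phiMap_eq hz hz', psiMap_eq hp]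
  refine Prod.ext (funext fun i => ?_) (funext fun i => ?_) <;>
  · simp only [Pi.add_apply]
    omega

theorem stmt16_general (n l : ℕ) :
    (∀ q, ymem n l q → dmem n l (PhiMap n q)) ∧
    (∀ p, dmem n l p → ymem n l (PsiMap n p)) ∧
    (∀ q, ymem n l q → PsiMap n (PhiMap n q) = q) ∧
    (∀ p, dmem n l p → PhiMap n (PsiMap n p) = p) :=
  ⟨fun _ => phiMap_mem, fun _ => psiMap_mem, fun _ => psiMap_phiMap, fun _ => phiMap_psiMap⟩

/-- combinatorial core of Theorem 3.7: `Φ` and `Ψ` are well defined and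
are mutually inverse bijections between `Y^(l)` and `B^(l)`. -/
theorem stmt16 (n l : ℕ) (hn : 4 ≤ n) (hl : 1 ≤ l) :
    (∀ q, ymem n l q → dmem n l (PhiMap n q)) ∧
    (∀ p, dmem n l p → ymem n l (PsiMap n p)) ∧
    (∀ q, ymem n l q → PsiMap n (PhiMap n q) = q) ∧
    (∀ p, dmem n l p → PhiMap n (PsiMap n p) = p) :=
  stmt16_general n l
end

section
/- Let σ : B^(l) → B^(l) be the map interchanging the entries x_1 and x̄_1 and fixing all other entries. Then σ is a well-defined involution of B^(l) satisfying: ε_0 ∘ σ = ε_1, φ_0 ∘ σ = φ_1, ε_1 ∘ σ = ε_0, φ_1 ∘ σ = φ_0, and ε_i ∘ σ = ε_i, φ_i ∘ σ = φ_i for 2 ≤ i ≤ n; moreover σ(f̃_0 b) = f̃_1(σ b), σ(ẽ_0 b) = ẽ_1(σ b), and σ(f̃_i b) = f̃_i(σ b), σ(ẽ_i b) = ẽ_i(σ b) for all 2 ≤ i ≤ n and all b ∈ B^(l) (with the convention σ(0) = 0). -/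
/-- The map `σ` interchanging the entries `x_1` and `x̄_1`. -/
def sigmaMap (p : DElt) : DElt :=
  (Function.update p.1 1 (p.2 1), Function.update p.2 1 (p.1 1))

/-!
`σ` only swaps `x_1` and `x̄_1`. For `n ≥ 3`, every `ε_i`, `φ_i`, `f̃_i`, `ẽ_i` with `i ≥ 2`
reads and writes only entries of index `≥ 2`, so it commutes with `σ`. For `i = 0, 1` the
formulas of Theorem 2.2 are mirror images of each other under `x_1 ↔ x̄_1`: both branch on the
comparison of `x_2` with `x̄_2`, change the same entry of index `2` in each branch, and `f̃_0`
changes `x_1`, `x̄_1` exactly as `f̃_1` changes `x̄_1`, `x_1`.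
-/

section Involution

variable {n l : ℕ}

@[simp]
lemma sigmaMap_fst_one (p : DElt) : (sigmaMap p).1 1 = p.2 1 := by
  simp [sigmaMap]

@[simp]
lemma sigmaMap_snd_one (p : DElt) : (sigmaMap p).2 1 = p.1 1 := by
  simp [sigmaMap]

lemma sigmaMap_fst_of_ne {j : ℕ} (hj : j ≠ 1) (p : DElt) : (sigmaMap p).1 j = p.1 j := by
  simp [sigmaMap, hj]

lemma sigmaMap_snd_of_ne {j : ℕ} (hj : j ≠ 1) (p : DElt) : (sigmaMap p).2 j = p.2 j := by
  simp [sigmaMap, hj]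

lemma sigmaMap_involutive : Function.Involutive sigmaMap := by
  intro p
  ext j <;> rcases eq_or_ne j 1 with rfl | hj <;>
    simp [sigmaMap_fst_of_ne, sigmaMap_snd_of_ne, *]

lemma dvalid_sigmaMap {p : DElt} (hp : dvalid n p) : dvalid n (sigmaMap p) := by
  intro i hi₁ hin
  rcases eq_or_ne i 1 with rfl | hi
  · simpa [and_comm] using hp 1 le_rfl hin
  · simpa [sigmaMap_fst_of_ne hi, sigmaMap_snd_of_ne hi] using hp i hi₁ hin

lemma dmem_sigmaMap (hn : 2 ≤ n) {p : DElt} (hp : dmem n l p) : dmem n l (sigmaMap p) := by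
  obtain ⟨hvalid, hzero, hxn, hsum⟩ := hp
  have hn1 : n ≠ 1 := by omega
  refine ⟨dvalid_sigmaMap hvalid, fun i hi => ?_, ?_, ?_⟩
  · have hi1 : i ≠ 1 := by omega
    rw [sigmaMap_fst_of_ne hi1, sigmaMap_snd_of_ne hi1]
    exact hzero i hi
  · rwa [sigmaMap_fst_of_ne hn1, sigmaMap_snd_of_ne hn1]
  · rw [← hsum]
    refine Finset.sum_congr rfl fun i _ => ?_
    rcases eq_or_ne i 1 with rfl | hi
    · simp [add_comm]
    · rw [sigmaMap_fst_of_ne hi, sigmaMap_snd_of_ne hi]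

end Involution

section Statistics

variable {n : ℕ} (p : DElt)

lemma deps_zero_sigmaMap (hn : 3 ≤ n) : deps n 0 (sigmaMap p) = deps n 1 p := by
  have : 1 ≤ n - 2 := by omega
  simp [deps, sigmaMap_fst_of_ne, sigmaMap_snd_of_ne, this]

lemma dphi_zero_sigmaMap (hn : 3 ≤ n) : dphi n 0 (sigmaMap p) = dphi n 1 p := by
  have : 1 ≤ n - 2 := by omega
  simp [dphi, sigmaMap_fst_of_ne, sigmaMap_snd_of_ne, this]

lemma deps_one_sigmaMap (hn : 3 ≤ n) : deps n 1 (sigmaMap p) = deps n 0 p := by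
  rw [← deps_zero_sigmaMap _ hn, sigmaMap_involutive p]

lemma dphi_one_sigmaMap (hn : 3 ≤ n) : dphi n 1 (sigmaMap p) = dphi n 0 p := by
  rw [← dphi_zero_sigmaMap _ hn, sigmaMap_involutive p]

lemma deps_sigmaMap_of_two_le (hn : 3 ≤ n) {i : ℕ} (hi : 2 ≤ i) :
    deps n i (sigmaMap p) = deps n i p := by
  simp [deps, sigmaMap_fst_of_ne, sigmaMap_snd_of_ne, show i ≠ 0 by omega, show i ≠ 1 by omega,
    show n - 1 ≠ 1 by omega, show n ≠ 1 by omega]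

lemma dphi_sigmaMap_of_two_le (hn : 3 ≤ n) {i : ℕ} (hi : 2 ≤ i) :
    dphi n i (sigmaMap p) = dphi n i p := by
  simp [dphi, sigmaMap_fst_of_ne, sigmaMap_snd_of_ne, show i ≠ 0 by omega, show i ≠ 1 by omega,
    show n - 1 ≠ 1 by omega, show n ≠ 1 by omega]

end Statistics

section Kashiwara

variable {n : ℕ} (p : DElt)

lemma sigmaMap_ftilde_zero (hn : 3 ≤ n) : sigmaMap (ftilde n 0 p) = ftilde n 1 (sigmaMap p) := by
  have : 1 ≤ n - 2 := by omega
  ext j <;>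
    simp only [sigmaMap, ftilde, this, Function.update_apply, apply_ite Prod.fst,
      apply_ite Prod.snd, ite_apply, if_true, one_ne_zero, if_false,
      show (1 : ℕ) + 1 = 2 from rfl] <;>
    split_ifs <;> omega

lemma sigmaMap_etilde_zero (hn : 3 ≤ n) : sigmaMap (etilde n 0 p) = etilde n 1 (sigmaMap p) := by
  have : 1 ≤ n - 2 := by omega
  ext j <;>
    simp only [sigmaMap, etilde, this, Function.update_apply, apply_ite Prod.fst,
      apply_ite Prod.snd, ite_apply, if_true, one_ne_zero, if_false,
      show (1 : ℕ) + 1 = 2 from rfl] <;>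
    split_ifs <;> omega

lemma sigmaMap_ftilde_of_two_le (hn : 3 ≤ n) {i : ℕ} (hi : 2 ≤ i) :
    sigmaMap (ftilde n i p) = ftilde n i (sigmaMap p) := by
  have hi0 : i ≠ 0 := by omega
  have hi1 : i ≠ 1 := by omega
  have hi1' : i + 1 ≠ 1 := by omega
  have hn1 : n ≠ 1 := by omega
  have hn1' : n - 1 ≠ 1 := by omega
  simp only [ftilde, hi0, if_false, sigmaMap_fst_of_ne, sigmaMap_snd_of_ne, ne_eq, hi1, hi1',
    hn1, hn1', not_false_eq_true]
  split_ifs <;> ext j <;> simp only [sigmaMap, Function.update_apply] <;> split_ifs <;> omega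

lemma sigmaMap_etilde_of_two_le (hn : 3 ≤ n) {i : ℕ} (hi : 2 ≤ i) :
    sigmaMap (etilde n i p) = etilde n i (sigmaMap p) := by
  have hi0 : i ≠ 0 := by omega
  have hi1 : i ≠ 1 := by omega
  have hi1' : i + 1 ≠ 1 := by omega
  have hn1 : n ≠ 1 := by omega
  have hn1' : n - 1 ≠ 1 := by omega
  simp only [etilde, hi0, if_false, sigmaMap_fst_of_ne, sigmaMap_snd_of_ne, ne_eq, hi1, hi1',
    hn1, hn1', not_false_eq_true]
  split_ifs <;> ext j <;> simp only [sigmaMap, Function.update_apply] <;> split_ifs <;> omega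

end Kashiwara

theorem stmt17_general (n l : ℕ) (hn : 4 ≤ n) :
    (∀ p, dmem n l p → dmem n l (sigmaMap p)) ∧
    (∀ p, dmem n l p → sigmaMap (sigmaMap p) = p) ∧
    (∀ p, dmem n l p →
      deps n 0 (sigmaMap p) = deps n 1 p ∧ dphi n 0 (sigmaMap p) = dphi n 1 p ∧
      deps n 1 (sigmaMap p) = deps n 0 p ∧ dphi n 1 (sigmaMap p) = dphi n 0 p ∧
      (∀ i, 2 ≤ i → i ≤ n →
        deps n i (sigmaMap p) = deps n i p ∧ dphi n i (sigmaMap p) = dphi n i p)) ∧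
    (∀ p, dmem n l p →
      sigmaMap (ftilde n 0 p) = ftilde n 1 (sigmaMap p) ∧
      sigmaMap (etilde n 0 p) = etilde n 1 (sigmaMap p) ∧
      (∀ i, 2 ≤ i → i ≤ n →
        sigmaMap (ftilde n i p) = ftilde n i (sigmaMap p) ∧
        sigmaMap (etilde n i p) = etilde n i (sigmaMap p))) := by
  have hn3 : 3 ≤ n := by omega
  refine ⟨fun p => dmem_sigmaMap (by omega), fun p _ => sigmaMap_involutive p,
    fun p _ => ⟨deps_zero_sigmaMap p hn3, dphi_zero_sigmaMap p hn3, deps_one_sigmaMap p hn3,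
      dphi_one_sigmaMap p hn3, fun i hi _ =>
        ⟨deps_sigmaMap_of_two_le p hn3 hi, dphi_sigmaMap_of_two_le p hn3 hi⟩⟩,
    fun p _ => ⟨sigmaMap_ftilde_zero p hn3, sigmaMap_etilde_zero p hn3, fun i hi _ =>
      ⟨sigmaMap_ftilde_of_two_le p hn3 hi, sigmaMap_etilde_of_two_le p hn3 hi⟩⟩⟩

/-- `σ` is a well-defined involution of `B^(l)` with
`ε_0 ∘ σ = ε_1`, `φ_0 ∘ σ = φ_1`, `ε_1 ∘ σ = ε_0`, `φ_1 ∘ σ = φ_0`, and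
`ε_i ∘ σ = ε_i`, `φ_i ∘ σ = φ_i` for `2 ≤ i ≤ n`; moreover `σ(f̃_0 b) = f̃_1(σ b)`,
`σ(ẽ_0 b) = ẽ_1(σ b)`, and `σ(f̃_i b) = f̃_i(σ b)`, `σ(ẽ_i b) = ẽ_i(σ b)` for
`2 ≤ i ≤ n` and all `b ∈ B^(l)` (the convention `σ(0) = 0` is automatic in the total
encoding of the Kashiwara operators). -/
theorem stmt17 (n l : ℕ) (hn : 4 ≤ n) (hl : 1 ≤ l) :
    (∀ p, dmem n l p → dmem n l (sigmaMap p)) ∧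
    (∀ p, dmem n l p → sigmaMap (sigmaMap p) = p) ∧
    (∀ p, dmem n l p →
      deps n 0 (sigmaMap p) = deps n 1 p ∧ dphi n 0 (sigmaMap p) = dphi n 1 p ∧
      deps n 1 (sigmaMap p) = deps n 0 p ∧ dphi n 1 (sigmaMap p) = dphi n 0 p ∧
      (∀ i, 2 ≤ i → i ≤ n →
        deps n i (sigmaMap p) = deps n i p ∧ dphi n i (sigmaMap p) = dphi n i p)) ∧
    (∀ p, dmem n l p →
      sigmaMap (ftilde n 0 p) = ftilde n 1 (sigmaMap p) ∧
      sigmaMap (etilde n 0 p) = etilde n 1 (sigmaMap p) ∧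
      (∀ i, 2 ≤ i → i ≤ n →
        sigmaMap (ftilde n i p) = ftilde n i (sigmaMap p) ∧
        sigmaMap (etilde n i p) = etilde n i (sigmaMap p))) :=
  stmt17_general n l hn
end

section
/- For every b ∈ B^(l), every i ∈ I, and every k ∈ ℕ: the k-fold iterate f̃_i^k b is a nonzero element of B^(l) if and only if k ≤ φ_i(b), and the k-fold iterate ẽ_i^k b is a nonzero element of B^(l) if and only if k ≤ ε_i(b). In particular φ_i(b) = max{k ∈ ℕ : f̃_i^k b ≠ 0} and ε_i(b) = max{k ∈ ℕ : ẽ_i^k b ≠ 0}. -/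
/-! Each branch of `f̃_i` and `ẽ_i` moves one unit between the entries of two indices
`1 ≤ j < j' ≤ n`, so it preserves the level, and (by inspection of the branches) the condition
`x_n = 0 ∨ x̄_n = 0` whenever the result is nonnegative. Checking the eight branches of
Theorem 2.2 shows that the result is nonnegative exactly when `φ_i(b) ≥ 1` (resp. `ε_i(b) ≥ 1`),
and that `φ_i` (resp. `ε_i`) then drops by one. Induction on `k` turns this one-step statement
into the statement about `k`-fold iterates. -/

theorem Finset.sum_eq_sum_of_eq_off_pair {ι β : Type*} [DecidableEq ι] [AddCommMonoid β]
    {s : Finset ι} {F G : ι → β} {a b : ι} (hab : a ≠ b) (ha : a ∈ s) (hb : b ∈ s)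
    (hoff : ∀ j ∈ s, j ≠ a → j ≠ b → F j = G j) (hpair : F a + F b = G a + G b) :
    ∑ j ∈ s, F j = ∑ j ∈ s, G j := by
  have hsub : {a, b} ⊆ s := Finset.insert_subset ha (Finset.singleton_subset_iff.mpr hb)
  rw [← Finset.sum_sdiff hsub, ← Finset.sum_sdiff hsub, Finset.sum_pair hab, Finset.sum_pair hab,
    hpair]
  congr 1
  refine Finset.sum_congr rfl fun j hj => ?_
  simp only [Finset.mem_sdiff, Finset.mem_insert, Finset.mem_singleton, not_or] at hj
  exact hoff j hj.1 hj.2.1 hj.2.2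

section StepsRemaining

variable {α : Type*}

/-- `φ p` is the number of further applications of `f` to `p ∈ M` whose results satisfy `V`. -/
def StepsRemaining (V M : α → Prop) (f : α → α) (φ : α → ℤ) : Prop :=
  ∀ p, M p → 0 ≤ φ p ∧ (V (f p) ↔ 1 ≤ φ p) ∧ (1 ≤ φ p → M (f p) ∧ φ (f p) = φ p - 1)

variable {V M : α → Prop} {f : α → α} {φ : α → ℤ}

theorem forall_iterate_succ_iff (k : ℕ) (p : α) :
    (∀ j, 1 ≤ j → j ≤ k + 1 → V (f^[j] p)) ↔
      V (f p) ∧ ∀ j, 1 ≤ j → j ≤ k → V (f^[j] (f p)) := by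
  constructor
  · intro h
    exact ⟨h 1 le_rfl (by omega), fun j hj hjk => by
      simpa only [Function.iterate_succ_apply] using h (j + 1) (by omega) (by omega)⟩
  · rintro ⟨h1, h⟩ (_ | _ | j) hj hjk
    · omega
    · exact h1
    · simpa only [Function.iterate_succ_apply] using h (j + 1) (by omega) (by omega)

theorem StepsRemaining.iterate_iff (h : StepsRemaining V M f φ) :
    ∀ (k : ℕ) {p : α}, M p →
      (((∀ j, 1 ≤ j → j ≤ k → V (f^[j] p)) ∧ M (f^[k] p)) ↔ (k : ℤ) ≤ φ p)
  | 0, p, hp => by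
    simp only [Nat.cast_zero, Function.iterate_zero_apply]
    exact ⟨fun _ => (h p hp).1, fun _ => ⟨fun j hj hj0 => by omega, hp⟩⟩
  | k + 1, p, hp => by
    obtain ⟨-, hvalid, hstep⟩ := h p hp
    rw [forall_iterate_succ_iff, Function.iterate_succ_apply, and_assoc]
    constructor
    · rintro ⟨hV, hrest⟩
      obtain ⟨hM, hφ⟩ := hstep (hvalid.1 hV)
      have hk := (h.iterate_iff k hM).1 hrest
      push_cast
      omega
    · intro hk
      have h1 : 1 ≤ φ p := by omega
      obtain ⟨hM, hφ⟩ := hstep h1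
      exact ⟨hvalid.2 h1, (h.iterate_iff k hM).2 (by push_cast at hk; omega)⟩

end StepsRemaining

section Move

variable {n l : ℕ} {p q : DElt} {a b : ℕ}

theorem dvalid_iff_of_eq_off (hv : dvalid n p) (ha : 1 ≤ a) (han : a ≤ n) (hb : 1 ≤ b)
    (hbn : b ≤ n) (hagree : ∀ j, j ≠ a → j ≠ b → q.1 j = p.1 j ∧ q.2 j = p.2 j) :
    dvalid n q ↔ (0 ≤ q.1 a ∧ 0 ≤ q.2 a) ∧ (0 ≤ q.1 b ∧ 0 ≤ q.2 b) := by
  refine ⟨fun hq => ⟨hq a ha han, hq b hb hbn⟩, ?_⟩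
  rintro ⟨hqa, hqb⟩ j hj hjn
  by_cases hja : j = a
  · exact hja ▸ hqa
  by_cases hjb : j = b
  · exact hjb ▸ hqb
  obtain ⟨h1, h2⟩ := hagree j hja hjb
  rw [h1, h2]
  exact hv j hj hjn

theorem dmem_step_of_eq_off (hp : dmem n l p) (hab : a ≠ b) (ha : 1 ≤ a) (han : a ≤ n)
    (hb : 1 ≤ b) (hbn : b ≤ n) {φ : DElt → ℤ}
    (hagree : ∀ j, j ≠ a → j ≠ b → q.1 j = p.1 j ∧ q.2 j = p.2 j)
    (hsum : q.1 a + q.2 a + (q.1 b + q.2 b) = p.1 a + p.2 a + (p.1 b + p.2 b))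
    (hvalid : ((0 ≤ q.1 a ∧ 0 ≤ q.2 a) ∧ (0 ≤ q.1 b ∧ 0 ≤ q.2 b)) ↔ 1 ≤ φ p)
    (hend : 1 ≤ φ p → q.1 n = 0 ∨ q.2 n = 0) (hφ : 1 ≤ φ p → φ q = φ p - 1) :
    (dvalid n q ↔ 1 ≤ φ p) ∧ (1 ≤ φ p → dmem n l q ∧ φ q = φ p - 1) := by
  obtain ⟨hv, hzero, -, hlevel⟩ := hp
  have hvq : dvalid n q ↔ 1 ≤ φ p := (dvalid_iff_of_eq_off hv ha han hb hbn hagree).trans hvalid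
  refine ⟨hvq, fun h1 => ⟨⟨hvq.2 h1, fun j hj => ?_, hend h1, ?_⟩, hφ h1⟩⟩
  · obtain ⟨h1, h2⟩ := hagree j (by omega) (by omega)
    exact ⟨h1.trans (hzero j hj).1, h2.trans (hzero j hj).2⟩
  · rw [← hlevel]
    refine Finset.sum_eq_sum_of_eq_off_pair hab (Finset.mem_Icc.2 ⟨ha, han⟩)
      (Finset.mem_Icc.2 ⟨hb, hbn⟩) (fun j _ hja hjb => ?_) hsum
    rw [(hagree j hja hjb).1, (hagree j hja hjb).2]

end Move

/-- `f̃_i` and `ẽ_i` change only the entries with indices `supportMin n i` and `supportMax n i`. -/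
def supportMin (n i : ℕ) : ℕ := if i = 0 then 1 else if i ≤ n - 2 then i else n - 1

def supportMax (n i : ℕ) : ℕ := if i = 0 then 2 else if i ≤ n - 2 then i + 1 else n

theorem one_le_supportMin_lt_supportMax_le {n i : ℕ} (hn : 2 ≤ n) (hi : i ≤ n) :
    1 ≤ supportMin n i ∧ supportMin n i < supportMax n i ∧ supportMax n i ≤ n := by
  unfold supportMin supportMax
  split_ifs <;> omega

theorem ftilde_etilde_stepsRemaining {n : ℕ} (l : ℕ) (hn : 3 ≤ n) {i : ℕ} (hi : i ≤ n) :
    StepsRemaining (dvalid n) (dmem n l) (ftilde n i) (dphi n i) ∧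
      StepsRemaining (dvalid n) (dmem n l) (etilde n i) (deps n i) := by
  obtain ⟨ha, hab, hbn⟩ := one_le_supportMin_lt_supportMax_le (by omega) hi
  refine ⟨fun p hp => ?_, fun p hp => ?_⟩
  all_goals
    have hpa := hp.1 _ ha (by omega)
    have hpb := hp.1 _ (by omega) hbn
    have hend := hp.2.2.1
    refine ⟨?_, dmem_step_of_eq_off hp hab.ne ha (by omega) (by omega) hbn ?_ ?_ ?_ ?_ ?_⟩
  all_goals try intro j hja hjb
  -- branch by branch of Theorem 2.2, linear arithmetic on the entries at the two support indices
  all_goals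
    simp only [ftilde, etilde, dphi, deps, pPart, supportMin, supportMax] at *
    split_ifs at * <;> (try simp only [Function.update_apply, true_and, and_true]) <;>
      (try split_ifs) <;> omega

theorem stmt19_general (n l : ℕ) (hn : 4 ≤ n) (p : DElt) (hp : dmem n l p)
    (i : ℕ) (hi : i ≤ n) (k : ℕ) :
    (((∀ j, 1 ≤ j → j ≤ k → dvalid n ((ftilde n i)^[j] p)) ∧
        dmem n l ((ftilde n i)^[k] p)) ↔ (k : ℤ) ≤ dphi n i p) ∧
    (((∀ j, 1 ≤ j → j ≤ k → dvalid n ((etilde n i)^[j] p)) ∧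
        dmem n l ((etilde n i)^[k] p)) ↔ (k : ℤ) ≤ deps n i p) := by
  obtain ⟨hf, he⟩ := ftilde_etilde_stepsRemaining l (by omega) hi
  exact ⟨hf.iterate_iff k hp, he.iterate_iff k hp⟩

/-- for `b ∈ B^(l)`, `i ∈ I`, and `k ∈ ℕ`: the `k`-fold iterate
`f̃_i^k b` is a nonzero element of `B^(l)` (i.e. every intermediate application is
nonzero and the result lies in `B^(l)`) iff `k ≤ φ_i(b)`; and likewise `ẽ_i^k b` is a
nonzero element of `B^(l)` iff `k ≤ ε_i(b)`.  (Consequently `φ_i(b)` and `ε_i(b)` are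
the largest such `k`.) -/
theorem stmt19 (n l : ℕ) (hn : 4 ≤ n) (hl : 1 ≤ l) (p : DElt) (hp : dmem n l p)
    (i : ℕ) (hi : i ≤ n) (k : ℕ) :
    (((∀ j, 1 ≤ j → j ≤ k → dvalid n ((ftilde n i)^[j] p)) ∧
        dmem n l ((ftilde n i)^[k] p)) ↔ (k : ℤ) ≤ dphi n i p) ∧
    (((∀ j, 1 ≤ j → j ≤ k → dvalid n ((etilde n i)^[j] p)) ∧
        dmem n l ((etilde n i)^[k] p)) ↔ (k : ℤ) ≤ deps n i p) :=
  stmt19_general n l hn p hp i hi k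
end
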